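/- For the array Φ₁₃ with rows (c,a,x,y,b,d), (d,w,a,b,z,c), (y,f,g,x,e,a), (a,g,f,e,w,z), (x,e,y,h,r,b), (b,z,e,r,h,w), every column, i.e. each of the six families i ↦ Φ₁₃ i j, is an orthonormal basis of ℂ^6. -/

import Mathlib

noncomputable section

/-- `ℂ^6` as a complex inner product space. -/
abbrev E6 : Type := EuclideanSpace ℂ (Fin 6)

/-- `1/√2` as a complex number. -/
def s2 : ℂ := (Real.sqrt 2 : ℂ)⁻¹

def va : E6 := (WithLp.equiv 2 (Fin 6 → ℂ)).symm ![1, 0, 0, 0, 0, 0]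
def vb : E6 := (WithLp.equiv 2 (Fin 6 → ℂ)).symm ![0, 1, 0, 0, 0, 0]
def vc : E6 := (WithLp.equiv 2 (Fin 6 → ℂ)).symm ![0, 0, 1, 0, 0, 0]
def vd : E6 := (WithLp.equiv 2 (Fin 6 → ℂ)).symm ![0, 0, 0, 1, 0, 0]
def ve : E6 := (WithLp.equiv 2 (Fin 6 → ℂ)).symm ![0, 0, s2, s2, 0, 0]
def vf : E6 := (WithLp.equiv 2 (Fin 6 → ℂ)).symm ![0, s2, 1/2, -(1/2), 0, 0]
def vg : E6 := (WithLp.equiv 2 (Fin 6 → ℂ)).symm ![0, s2, -(1/2), 1/2, 0, 0]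
def vh : E6 := (WithLp.equiv 2 (Fin 6 → ℂ)).symm ![s2, 0, 1/2, -(1/2), 0, 0]
def vr : E6 := (WithLp.equiv 2 (Fin 6 → ℂ)).symm ![s2, 0, -(1/2), 1/2, 0, 0]
def vx : E6 := (WithLp.equiv 2 (Fin 6 → ℂ)).symm ![0, 0, 0, 0, 1, 0]
def vy : E6 := (WithLp.equiv 2 (Fin 6 → ℂ)).symm ![0, 0, 0, 0, 0, 1]
def vz : E6 := (WithLp.equiv 2 (Fin 6 → ℂ)).symm ![0, 0, 0, 0, s2, s2]
def vw : E6 := (WithLp.equiv 2 (Fin 6 → ℂ)).symm ![0, 0, 0, 0, s2, -s2]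

/-- The array `Φ₁₃`. -/
def Phi13 : Fin 6 → Fin 6 → E6 :=
  ![![vc, va, vx, vy, vb, vd],
    ![vd, vw, va, vb, vz, vc],
    ![vy, vf, vg, vx, ve, va],
    ![va, vg, vf, ve, vw, vz],
    ![vx, ve, vy, vh, vr, vb],
    ![vb, vz, ve, vr, vh, vw]]

/-!
The vectors `a, …, r` are supported on the first four coordinates and `x, y, z, w` on the
last two, so the two groups are orthogonal to each other. Each column of `Φ₁₃` is, up to
order, one of the orthonormal bases `{a, b, c, d}`, `{a, e, f, g}`, `{b, e, h, r}` of the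
first block followed by one of the orthonormal bases `{x, y}`, `{z, w}` of the second; six
orthonormal vectors in `ℂ^6` span it.
-/

open scoped InnerProductSpace

theorem Orthonormal.fin_append {𝕜 E : Type*} [RCLike 𝕜] [SeminormedAddCommGroup E]
    [InnerProductSpace 𝕜 E] {m n : ℕ} {u : Fin m → E} {v : Fin n → E}
    (hu : Orthonormal 𝕜 u) (hv : Orthonormal 𝕜 v) (huv : ∀ i k, ⟪u i, v k⟫_𝕜 = 0) :
    Orthonormal 𝕜 (Fin.append u v) := by
  refine ⟨fun i => ?_, fun i k hik => ?_⟩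
  · induction i using Fin.addCases <;> simp [hu.1, hv.1]
  · induction i using Fin.addCases <;> induction k using Fin.addCases
    · simpa using hu.2 (by simpa using hik)
    · simp [huv]
    · simp [inner_eq_zero_symm.1 (huv _ _)]
    · simpa using hv.2 (by simpa using hik)

theorem EuclideanSpace.orthonormal_iff {𝕜 ι κ : Type*} [RCLike 𝕜] [Fintype κ]
    [DecidableEq ι] {v : ι → EuclideanSpace 𝕜 κ} :
    Orthonormal 𝕜 v ↔
      ∀ i k, ∑ l, starRingEnd 𝕜 (v i l) * v k l = if i = k then 1 else 0 := by
  simp only [orthonormal_iff_ite, PiLp.inner_apply, RCLike.inner_apply, mul_comm]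

lemma conj_s2 : starRingEnd ℂ s2 = s2 := by
  simp [s2, ← Complex.ofReal_inv]

lemma s2_mul_s2 : s2 * s2 = 1 / 2 := by
  rw [s2, ← mul_inv, ← Complex.ofReal_mul, Real.mul_self_sqrt zero_le_two]
  norm_num

lemma inner_eq_zero_of_upper_of_lower {p q : E6} (hp : p 4 = 0 ∧ p 5 = 0)
    (hq : q 0 = 0 ∧ q 1 = 0 ∧ q 2 = 0 ∧ q 3 = 0) : ⟪p, q⟫_ℂ = 0 := by
  obtain ⟨h4, h5⟩ := hp
  obtain ⟨h0, h1, h2, h3⟩ := hq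
  simp [PiLp.inner_apply, Fin.sum_univ_six, h0, h1, h2, h3, h4, h5]

def upperBasis : Fin 3 → Fin 4 → E6 :=
  ![![va, vb, vc, vd], ![va, ve, vf, vg], ![vb, ve, vh, vr]]

def lowerBasis : Fin 2 → Fin 2 → E6 :=
  ![![vx, vy], ![vz, vw]]

lemma orthonormal_upperBasis (s : Fin 3) : Orthonormal ℂ (upperBasis s) := by
  rw [EuclideanSpace.orthonormal_iff]
  intro i k
  fin_cases s <;> fin_cases i <;> fin_cases k <;>
    simp [upperBasis, va, vb, vc, vd, ve, vf, vg, vh, vr, Fin.sum_univ_six, conj_s2, s2_mul_s2,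
      map_ofNat] <;>
    norm_num

lemma orthonormal_lowerBasis (t : Fin 2) : Orthonormal ℂ (lowerBasis t) := by
  rw [EuclideanSpace.orthonormal_iff]
  intro i k
  fin_cases t <;> fin_cases i <;> fin_cases k <;>
    simp [lowerBasis, vx, vy, vz, vw, Fin.sum_univ_six, conj_s2, s2_mul_s2] <;> norm_num

lemma upperBasis_supported (s : Fin 3) (i : Fin 4) :
    upperBasis s i 4 = 0 ∧ upperBasis s i 5 = 0 := by
  fin_cases s <;> fin_cases i <;> simp [upperBasis, va, vb, vc, vd, ve, vf, vg, vh, vr]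

lemma lowerBasis_supported (t : Fin 2) (k : Fin 2) :
    lowerBasis t k 0 = 0 ∧ lowerBasis t k 1 = 0 ∧
      lowerBasis t k 2 = 0 ∧ lowerBasis t k 3 = 0 := by
  fin_cases t <;> fin_cases k <;> simp [lowerBasis, vx, vy, vz, vw]

lemma orthonormal_append_upperBasis_lowerBasis (s : Fin 3) (t : Fin 2) :
    Orthonormal ℂ (Fin.append (upperBasis s) (lowerBasis t)) :=
  (orthonormal_upperBasis s).fin_append (orthonormal_lowerBasis t) fun i k =>
    inner_eq_zero_of_upper_of_lower (upperBasis_supported s i) (lowerBasis_supported t k)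

lemma Phi13_col_eq_comp (j : Fin 6) : ∃ (s : Fin 3) (t : Fin 2) (σ : Fin 6 → Fin 6),
    Function.Injective σ ∧
      (fun i => Phi13 i j) = Fin.append (upperBasis s) (lowerBasis t) ∘ σ := by
  fin_cases j
  · exact ⟨0, 0, ![2, 3, 5, 0, 4, 1], by decide, by funext i; fin_cases i <;> rfl⟩
  · exact ⟨1, 1, ![0, 5, 2, 3, 1, 4], by decide, by funext i; fin_cases i <;> rfl⟩
  · exact ⟨1, 0, ![4, 0, 3, 2, 5, 1], by decide, by funext i; fin_cases i <;> rfl⟩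
  · exact ⟨2, 0, ![5, 0, 4, 1, 2, 3], by decide, by funext i; fin_cases i <;> rfl⟩
  · exact ⟨2, 1, ![0, 4, 1, 5, 3, 2], by decide, by funext i; fin_cases i <;> rfl⟩
  · exact ⟨0, 1, ![3, 2, 0, 4, 1, 5], by decide, by funext i; fin_cases i <;> rfl⟩

/-- Every column of `Φ₁₃` is an orthonormal basis of `ℂ^6`. -/
theorem Phi13_cols_orthonormal_basis :
    ∀ j : Fin 6, Orthonormal ℂ (fun i => Phi13 i j) ∧
      Submodule.span ℂ (Set.range fun i => Phi13 i j) = ⊤ := by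
  intro j
  obtain ⟨s, t, σ, hσ, hcol⟩ := Phi13_col_eq_comp j
  have hon : Orthonormal ℂ fun i => Phi13 i j :=
    hcol ▸ (orthonormal_append_upperBasis_lowerBasis s t).comp σ hσ
  refine ⟨hon, hon.linearIndependent.span_eq_top_of_card_eq_finrank ?_⟩
  simp
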